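/- Let X be an ordered locally convex space admitting a strictly positive element U ∈ X_+, A a convex acceptance set with nonempty interior, and S a traded asset with ρ_{A,S} > −∞ everywhere. Then ρ_{A,S} is finitely valued on X if and only if ρ_{A,S}(−λU) < ∞ for all λ > 0. -/

import Mathlib

open Filter Topology

variable {X : Type*} [AddCommGroup X] [Module ℝ X] [PartialOrder X]
  [CovariantClass X X (· + ·) (· ≤ ·)] [PosSMulMono ℝ X]
  [TopologicalSpace X] [IsTopologicalAddGroup X] [ContinuousSMul ℝ X]

/-- The risk measure `ρ_{A,S}(x) = inf {m : x + (m/S₀)·S_T ∈ A}`, valued in `EReal`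
(with `inf ∅ = ⊤` and unbounded-below giving `⊥`). -/
noncomputable def rho (A : Set X) (S0 : ℝ) (ST : X) (x : X) : EReal :=
  sInf ((fun r : ℝ => (r : EReal)) '' {r : ℝ | x + (r / S0) • ST ∈ A})

/-- A set is monotone if it contains, with any element, every larger element. -/
def MonotoneSet (A : Set X) : Prop := ∀ x ∈ A, ∀ y, x ≤ y → y ∈ A

/-- An acceptance set: nonempty, proper, and monotone. -/
def AcceptanceSet (A : Set X) : Prop := A.Nonempty ∧ A ≠ Set.univ ∧ MonotoneSet A

/-- The algebraic core (algebraic interior) of a set. -/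
def algCore (A : Set X) : Set X :=
  {x | ∀ y : X, ∃ ε > 0, ∀ l : ℝ, |l| < ε → x + l • y ∈ A}

/-- `U` is strictly positive: every nonzero positive continuous linear functional is
strictly positive on `U`. -/
def StrictlyPositiveElt (U : X) : Prop :=
  0 ≤ U ∧ ∀ ψ : X →L[ℝ] ℝ, ψ ≠ 0 → (∀ x : X, 0 ≤ x → 0 ≤ ψ x) → 0 < ψ U

/-! If `ρ(x) = ⊤`, the line `x + ℝ·S₀⁻¹S_T` misses `A`. As `A` is convex with nonempty interior,
Hahn–Banach gives a nonzero continuous functional `f` bounded above on `A` and below on the line,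
hence constant along it. Monotonicity of `A` forces `f ≤ 0` on `X₊`, so strict positivity of `U`
gives `f U < 0`. But `ρ(-λU) < ⊤` puts points of `-λU + ℝ·S₀⁻¹S_T` into `A`, where `f` takes
the value `-λ f U`, unbounded as `λ → ∞`. -/

lemma rho_eq_top_iff {E : Type*} [AddCommGroup E] [Module ℝ E] (A : Set E) (S0 : ℝ) (ST x : E) :
    rho A S0 ST x = ⊤ ↔ ∀ r : ℝ, x + (r / S0) • ST ∉ A := by
  simp [rho, sInf_eq_top]

lemma nonpos_of_forall_add_mul_le {b c u : ℝ} (h : ∀ t : ℝ, 0 < t → c + t * b ≤ u) : b ≤ 0 := by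
  by_contra! hb
  have key := h ((|u - c| + 1) / b) (by positivity)
  rw [div_mul_cancel₀ _ hb.ne'] at key
  linarith [le_abs_self (u - c)]

open scoped Pointwise in
lemma Convex.exists_dual_bddAbove_of_forall_add_smul_notMem {E : Type*} [TopologicalSpace E]
    [AddCommGroup E] [Module ℝ E] [IsTopologicalAddGroup E] [ContinuousSMul ℝ E]
    {A : Set E} (hconv : Convex ℝ A)
    (hint : (interior A).Nonempty) {x v : E} (hline : ∀ r : ℝ, x + r • v ∉ A) :
    ∃ (f : StrongDual ℝ E) (u : ℝ), f ≠ 0 ∧ f v = 0 ∧ ∀ a ∈ A, f a ≤ u := by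
  have hdisj : Disjoint (interior A) (x +ᵥ ((ℝ ∙ v : Submodule ℝ E) : Set E)) := by
    rw [Set.disjoint_right]
    rintro _ ⟨_, hw, rfl⟩ hA
    obtain ⟨r, rfl⟩ := Submodule.mem_span_singleton.1 hw
    exact hline r (by simpa [add_comm] using interior_subset hA)
  obtain ⟨f, u, hf0, hfA, hfline⟩ := geometric_hahn_banach_of_nonempty_interior hconv
    ((ℝ ∙ v).convex.vadd x) hdisj hint ⟨x, 0, zero_mem _, by simp⟩
  have hline_le (r : ℝ) : u ≤ f x + r * f v := by
    simpa [add_comm] using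
      hfline _ ⟨r • v, Submodule.smul_mem _ r (Submodule.mem_span_singleton_self v), rfl⟩
  have hle : f v ≤ 0 := nonpos_of_forall_add_mul_le (c := -f x) (u := -u) fun t _ => by
    linarith [hline_le (-t)]
  have hge : -f v ≤ 0 := nonpos_of_forall_add_mul_le (c := -f x) (u := -u) fun t _ => by
    linarith [hline_le t]
  exact ⟨f, u, hf0, by linarith, hfA⟩

lemma MonotoneSet.map_nonpos_of_forall_le {E : Type*} [AddCommGroup E] [Module ℝ E]
    [PartialOrder E] [AddLeftMono E] [PosSMulMono ℝ E] {A : Set E} (hA : MonotoneSet A)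
    {a : E} (ha : a ∈ A) {f : E →ₗ[ℝ] ℝ} {u : ℝ} (hf : ∀ a ∈ A, f a ≤ u) {y : E} (hy : 0 ≤ y) :
    f y ≤ 0 :=
  nonpos_of_forall_add_mul_le (c := f a) (u := u) fun t ht => by
    simpa using hf _ (hA a ha _ (le_add_of_nonneg_right (smul_nonneg ht.le hy)))

lemma StrictlyPositiveElt.map_neg_of_nonpos {E : Type*} [AddCommGroup E] [Module ℝ E]
    [PartialOrder E] [TopologicalSpace E] {U : E} (hU : StrictlyPositiveElt U)
    {f : StrongDual ℝ E} (hf0 : f ≠ 0) (hf : ∀ y : E, 0 ≤ y → f y ≤ 0) : f U < 0 := by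
  simpa using hU.2 (-f) (neg_ne_zero.2 hf0) fun y hy => by simpa using hf y hy

theorem rho_finite_iff_finite_on_strictlyPositive_ray_general
    (U : X) (hU : StrictlyPositiveElt U)
    (A : Set X) (S0 : ℝ) (ST : X)
    (hA : AcceptanceSet A) (hconv : Convex ℝ A) (hint : (interior A).Nonempty) :
    (∀ x : X, rho A S0 ST x ≠ ⊤) ↔ (∀ l : ℝ, 0 < l → rho A S0 ST (-(l • U)) ≠ ⊤) := by
  refine ⟨fun h l _ => h _, fun h x hx => ?_⟩
  obtain ⟨f, u, hf0, hfST, hfA⟩ := hconv.exists_dual_bddAbove_of_forall_add_smul_notMem hint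
    (v := S0⁻¹ • ST) fun r hr =>
      (rho_eq_top_iff A S0 ST x).1 hx r (by rwa [div_eq_mul_inv, mul_smul])
  obtain ⟨a, ha⟩ := hint
  have hfU : f U < 0 := hU.map_neg_of_nonpos hf0 fun y hy =>
    hA.2.2.map_nonpos_of_forall_le (f := f) (interior_subset ha) hfA hy
  refine (nonpos_of_forall_add_mul_le (c := 0) (u := u) fun l hl => ?_).not_gt (neg_pos.2 hfU)
  obtain ⟨r, hr⟩ : ∃ r : ℝ, -(l • U) + (r / S0) • ST ∈ A := by
    simpa using mt (rho_eq_top_iff A S0 ST _).2 (h l hl)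
  simpa [div_eq_mul_inv, mul_smul, hfST] using hfA _ hr

/-- for a convex acceptance set with nonempty interior in an ordered
locally convex space admitting a strictly positive element U, and ρ_{A,S} > -∞
everywhere, ρ_{A,S} is finitely valued iff ρ_{A,S}(-λU) < ∞ for all λ > 0. -/
theorem rho_finite_iff_finite_on_strictlyPositive_ray [LocallyConvexSpace ℝ X]
    (U : X) (hU : StrictlyPositiveElt U)
    (A : Set X) (S0 : ℝ) (ST : X)
    (hA : AcceptanceSet A) (hconv : Convex ℝ A) (hint : (interior A).Nonempty)
    (hS0 : 0 < S0) (hST : 0 ≤ ST) (hSTne : ST ≠ 0)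
    (hnobot : ∀ x : X, rho A S0 ST x ≠ ⊥) :
    (∀ x : X, rho A S0 ST x ≠ ⊤) ↔ (∀ l : ℝ, 0 < l → rho A S0 ST (-(l • U)) ≠ ⊤) :=
  rho_finite_iff_finite_on_strictlyPositive_ray_general U hU A S0 ST hA hconv hint
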